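/- Let G be the comparability graph of a finite poset P = (V, ≤). Let D* be a minimal dominating set of G, let v ∈ D* be an isolated vertex of G[D*], and let u be a neighbor of v with u ≤ v. Define R_1 = {x ∈ D* : u ≤ x and x ∈ priv(D*, x)}, B = V ∖ N[(D* ∖ R_1) ∪ {u}], R_2 = ↑B ∖ N[R_1], and R = (R_1 ∖ {v}) ∪ R_2. If X is an inclusion-minimal subset of R with B ⊆ N[X], then (D* ∖ R_1) ∪ {u} ∪ X is a dominating set of G, and every x ∈ X has a private neighbor in B with respect to (D* ∖ R_1) ∪ {u} ∪ X, i.e., there exists y ∈ B with N[y] ∩ ((D* ∖ R_1) ∪ {u} ∪ X) = {x}. -/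

import Mathlib

open Set

/-- The closed neighborhood `N[v]` of a vertex. -/
def closedNbhd {V : Type*} (G : SimpleGraph V) (v : V) : Set V :=
  insert v (G.neighborSet v)

/-- The closed neighborhood `N[S]` of a set of vertices. -/
def closedNbhdSet {V : Type*} (G : SimpleGraph V) (S : Set V) : Set V :=
  ⋃ v ∈ S, closedNbhd G v

/-- `D` is a dominating set of `G`. -/
def IsDomSet {V : Type*} (G : SimpleGraph V) (D : Set V) : Prop :=
  ∀ w, w ∈ closedNbhdSet G D

/-- `D` is a minimal dominating set of `G`. -/
def IsMinDomSet {V : Type*} (G : SimpleGraph V) (D : Set V) : Prop :=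
  IsDomSet G D ∧ ∀ D' ⊂ D, ¬ IsDomSet G D'

/-- The set `priv(D, u)` of private neighbors of `u` with respect to `D`:
vertices `v` with `N[v] ∩ D = {u}`. -/
def privSet {V : Type*} (G : SimpleGraph V) (D : Set V) (u : V) : Set V :=
  {v | closedNbhd G v ∩ D = {u}}

/-- `X` is a maximal independent set of the subgraph of `G` induced by `S`. -/
def IsMaxIndepOn {V : Type*} (G : SimpleGraph V) (S X : Set V) : Prop :=
  X ⊆ S ∧ (∀ x ∈ X, ∀ y ∈ X, ¬ G.Adj x y) ∧
    ∀ X' ⊆ S, (∀ x ∈ X', ∀ y ∈ X', ¬ G.Adj x y) → X ⊆ X' → X' = X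

/-- The comparability graph of a poset: distinct vertices are adjacent iff comparable. -/
def compGraph (V : Type*) [PartialOrder V] : SimpleGraph V :=
  SimpleGraph.fromRel (fun x y => x ≤ y)

/-! Write `A = (D* ∖ R₁) ∪ {u}`, so that `B` is the set of vertices not dominated by `A`.
If `X` dominates `B`, then `A ∪ X` dominates everything. If moreover `X` is inclusion-minimal,
each `x ∈ X` is the only member of `X` dominating some `y ∈ B`; as `y` has no neighbour in `A`,
it is a private neighbour of `x` with respect to `A ∪ X`. -/

section

variable {V : Type*} (G : SimpleGraph V)

lemma mem_closedNbhd_comm {a b : V} : a ∈ closedNbhd G b ↔ b ∈ closedNbhd G a := by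
  simp only [closedNbhd, mem_insert_iff, SimpleGraph.mem_neighborSet, G.adj_comm, eq_comm]

lemma mem_closedNbhdSet {S : Set V} {w : V} :
    w ∈ closedNbhdSet G S ↔ ∃ s ∈ S, w ∈ closedNbhd G s := by
  simp only [closedNbhdSet, mem_iUnion₂, exists_prop]

lemma closedNbhdSet_union (A X : Set V) :
    closedNbhdSet G (A ∪ X) = closedNbhdSet G A ∪ closedNbhdSet G X :=
  biUnion_union A X _

lemma closedNbhd_inter_eq_empty_of_notMem {S : Set V} {y : V}
    (hy : y ∉ closedNbhdSet G S) : closedNbhd G y ∩ S = ∅ := by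
  refine eq_empty_of_forall_notMem fun s ⟨hys, hs⟩ => hy ?_
  exact (mem_closedNbhdSet G).2 ⟨s, hs, (mem_closedNbhd_comm G).1 hys⟩

lemma isDomSet_union_of_compl_subset {A X : Set V}
    (h : univ \ closedNbhdSet G A ⊆ closedNbhdSet G X) : IsDomSet G (A ∪ X) := by
  intro w
  rw [closedNbhdSet_union]
  by_cases hw : w ∈ closedNbhdSet G A
  · exact Or.inl hw
  · exact Or.inr (h ⟨mem_univ w, hw⟩)

lemma exists_closedNbhd_inter_eq_singleton_of_minimal {B X : Set V}
    (hdom : B ⊆ closedNbhdSet G X) (hmin : ∀ X' ⊂ X, ¬ B ⊆ closedNbhdSet G X')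
    {x : V} (hx : x ∈ X) : ∃ y ∈ B, closedNbhd G y ∩ X = {x} := by
  obtain ⟨y, hyB, hy⟩ := not_subset.1 (hmin (X \ {x}) (sdiff_singleton_ssubset.2 hx))
  refine ⟨y, hyB, ?_⟩
  have hsub : closedNbhd G y ∩ X ⊆ {x} := fun z ⟨hzy, hzX⟩ => by
    by_contra hzx
    exact (closedNbhd_inter_eq_empty_of_notMem G hy).subset ⟨hzy, hzX, hzx⟩
  have hne : (closedNbhd G y ∩ X).Nonempty := by
    obtain ⟨s, hs, hys⟩ := (mem_closedNbhdSet G).1 (hdom hyB)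
    exact ⟨s, (mem_closedNbhd_comm G).1 hys, hs⟩
  exact hne.subset_singleton_iff.1 hsub

end

theorem stmt10_general {V : Type*} [PartialOrder V]
    (Dstar : Set V)
    (u : V)
    (R1 B R : Set V)
    (hB : B = univ \ closedNbhdSet (compGraph V) ((Dstar \ R1) ∪ {u}))
    (X : Set V) (hX : X ⊆ R ∧ B ⊆ closedNbhdSet (compGraph V) X ∧
      ∀ X' ⊂ X, ¬ B ⊆ closedNbhdSet (compGraph V) X') :
    IsDomSet (compGraph V) ((Dstar \ R1) ∪ {u} ∪ X) ∧
    ∀ x ∈ X, ∃ y ∈ B,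
      closedNbhd (compGraph V) y ∩ ((Dstar \ R1) ∪ {u} ∪ X) = {x} := by
  obtain ⟨-, hXdom, hXmin⟩ := hX
  subst hB
  refine ⟨isDomSet_union_of_compl_subset _ hXdom, fun x hx => ?_⟩
  obtain ⟨y, hyB, hyX⟩ := exists_closedNbhd_inter_eq_singleton_of_minimal _ hXdom hXmin hx
  refine ⟨y, hyB, ?_⟩
  rw [inter_union_distrib_left, closedNbhd_inter_eq_empty_of_notMem _ hyB.2, hyX, empty_union]

/-- In the comparability graph of a finite poset, let `D*` be a minimal dominating set,
`v ∈ D*` isolated in `G[D*]`, and `u` a neighbor of `v` with `u ≤ v`.  With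
`R₁ = {x ∈ D* : u ≤ x, x ∈ priv(D*,x)}`, `B = V ∖ N[(D* ∖ R₁) ∪ {u}]`,
`R₂ = ↑B ∖ N[R₁]` and `R = (R₁ ∖ {v}) ∪ R₂`: for every inclusion-minimal `X ⊆ R` with
`B ⊆ N[X]`, the set `(D* ∖ R₁) ∪ {u} ∪ X` is a dominating set of `G` and every `x ∈ X`
has a private neighbor in `B` with respect to it. -/
theorem stmt10 {V : Type*} [Fintype V] [PartialOrder V]
    (Dstar : Set V) (hDstar : IsMinDomSet (compGraph V) Dstar)
    (v : V) (hv : v ∈ Dstar) (hiso : ∀ w ∈ Dstar, ¬ (compGraph V).Adj v w)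
    (u : V) (hu : (compGraph V).Adj u v) (huv : u ≤ v)
    (R1 B R2 R : Set V)
    (hR1 : R1 = {x ∈ Dstar | u ≤ x ∧ x ∈ privSet (compGraph V) Dstar x})
    (hB : B = univ \ closedNbhdSet (compGraph V) ((Dstar \ R1) ∪ {u}))
    (hR2 : R2 = {w : V | ∃ s ∈ B, s ≤ w} \ closedNbhdSet (compGraph V) R1)
    (hR : R = (R1 \ {v}) ∪ R2)
    (X : Set V) (hX : X ⊆ R ∧ B ⊆ closedNbhdSet (compGraph V) X ∧
      ∀ X' ⊂ X, ¬ B ⊆ closedNbhdSet (compGraph V) X') :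
    IsDomSet (compGraph V) ((Dstar \ R1) ∪ {u} ∪ X) ∧
    ∀ x ∈ X, ∃ y ∈ B,
      closedNbhd (compGraph V) y ∩ ((Dstar \ R1) ∪ {u} ∪ X) = {x} :=
  stmt10_general Dstar u R1 B R hB X hX
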